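/- arXiv:2110.11234 — 3 statements merged into one kernel-verified Lean document; each statement's English description precedes it below -/
import Mathlib

section
/- Let Λ_TU be a continuous (T,U)-controlled g-fusion frame for H with bounds A, B, and let V be a bounded invertible operator on H such that V* commutes with both T and U. Then Γ_TU = {(V F(x), Λ_x P_{F(x)} V*, v(x))}_{x∈X} is a continuous (T,U)-controlled g-fusion frame for H with bounds A‖V^{-1}‖^{-2} and B‖V‖²: for every f ∈ H, A‖V^{-1}‖^{-2}‖f‖² ≤ ∫_X v(x)² ⟨Λ_x P_{F(x)} V* P_{V F(x)} U f, Λ_x P_{F(x)} V* P_{V F(x)} T f⟩ dμ(x) ≤ B‖V‖²‖f‖² (here V F(x) is a closed subspace of H since V is invertible, and the map x ↦ P_{V F(x)} f is weakly measurable). -/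
open MeasureTheory ContinuousLinearMap
open scoped ComplexOrder

/-- The orthogonal projection onto a closed subspace, as an operator `H →L[ℂ] H`. -/
noncomputable def ctrlProj {H : Type*} [NormedAddCommGroup H] [InnerProductSpace ℂ H]
    (F : Submodule ℂ H) [Submodule.HasOrthogonalProjection F] : H →L[ℂ] H :=
  F.subtypeL.comp (F.orthogonalProjectionOnto)

private lemma ctrlProj_orthogonal_zero {H : Type*} [NormedAddCommGroup H]
    [InnerProductSpace ℂ H] (M : Submodule ℂ H) [Submodule.HasOrthogonalProjection M]
    {w : H} (h : w ∈ Mᗮ) : ctrlProj M w = 0 := by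
  simp only [ctrlProj, ContinuousLinearMap.comp_apply]
  rw [Submodule.orthogonalProjectionOnto_apply_of_mem_orthogonal h]
  simp

private lemma ctrlProj_adjoint_proj {H : Type*} [NormedAddCommGroup H]
    [InnerProductSpace ℂ H] [CompleteSpace H] (M : Submodule ℂ H)
    [Submodule.HasOrthogonalProjection M] (V : H →L[ℂ] H)
    [Submodule.HasOrthogonalProjection (Submodule.map (V : H →ₗ[ℂ] H) M)] (g : H) :
    ctrlProj M ((adjoint V) ((ctrlProj (Submodule.map (V : H →ₗ[ℂ] H) M)) g))
      = ctrlProj M ((adjoint V) g) := by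
  set w := g - (ctrlProj (Submodule.map (V : H →ₗ[ℂ] H) M)) g with hw
  have hmem : w ∈ (Submodule.map (V : H →ₗ[ℂ] H) M)ᗮ := by
    exact
      Submodule.sub_starProjection_mem_orthogonal (K := Submodule.map (V : H →ₗ[ℂ] H) M) g
  have h2 : (adjoint V) w ∈ Mᗮ := by
    intro m hm
    rw [ContinuousLinearMap.adjoint_inner_right]
    exact hmem (V m) ⟨m, hm, rfl⟩
  have h3 : ctrlProj M ((adjoint V) w) = 0 := ctrlProj_orthogonal_zero M h2
  have h4 : (ctrlProj (Submodule.map (V : H →ₗ[ℂ] H) M)) g = g - w := by rw [hw]; abel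
  rw [h4, map_sub, map_sub, h3, sub_zero]

/-- If `Λ_TU` is a continuous `(T,U)`-controlled `g`-fusion frame for `H` with
bounds `A, B` and `V` is a bounded invertible operator on `H` whose adjoint commutes with `T`
and `U`, then `{(V F(x), Λₓ P_{F x} V*, v(x))}` is a continuous `(T,U)`-controlled `g`-fusion
frame for `H` with bounds `A‖V⁻¹‖⁻²` and `B‖V‖²`. -/
theorem stmt3
    {H : Type*} [NormedAddCommGroup H] [InnerProductSpace ℂ H] [CompleteSpace H]
    {X : Type*} [MeasurableSpace X] (μ : Measure X)
    {K : X → Type*} [∀ x, NormedAddCommGroup (K x)] [∀ x, InnerProductSpace ℂ (K x)]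
    [∀ x, CompleteSpace (K x)]
    (F : X → Submodule ℂ H) [∀ x, Submodule.HasOrthogonalProjection (F x)]
    (Λ : ∀ x, H →L[ℂ] K x) (v : X → ℝ) (T U : H →L[ℂ] H)
    (V Vinv : H →L[ℂ] H)
    [∀ x, Submodule.HasOrthogonalProjection (Submodule.map (V : H →ₗ[ℂ] H) (F x))]
    (hv : Measurable v) (hvpos : ∀ x, 0 < v x)
    (hT : T.IsPositive) (hU : U.IsPositive) (hTinv : IsUnit T) (hUinv : IsUnit U)
    (hFmeas : ∀ f g : H, Measurable fun x => (inner ℂ ((ctrlProj (F x)) f) g : ℂ))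
    (hVFmeas : ∀ f g : H, Measurable fun x =>
      (inner ℂ ((ctrlProj (Submodule.map (V : H →ₗ[ℂ] H) (F x))) f) g : ℂ))
    -- V is invertible with inverse Vinv
    (hV₁ : V.comp Vinv = ContinuousLinearMap.id ℂ H)
    (hV₂ : Vinv.comp V = ContinuousLinearMap.id ℂ H)
    -- V* commutes with T and U
    (hVT : (adjoint V).comp T = T.comp (adjoint V))
    (hVU : (adjoint V).comp U = U.comp (adjoint V))
    (A B : ℝ) (hA : 0 < A) (hAB : A ≤ B)
    -- Λ_TU is a continuous (T,U)-controlled g-fusion frame with bounds A, B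
    (hΛint : ∀ f : H, Integrable (fun x => ((v x : ℂ))^2 *
      (inner ℂ (Λ x ((ctrlProj (F x)) (U f))) (Λ x ((ctrlProj (F x)) (T f))) : ℂ)) μ)
    (hΛframe : ∀ f : H,
      ((A * ‖f‖^2 : ℝ) : ℂ) ≤
        (∫ x, ((v x : ℂ))^2 *
          (inner ℂ (Λ x ((ctrlProj (F x)) (U f))) (Λ x ((ctrlProj (F x)) (T f))) : ℂ) ∂μ) ∧
      (∫ x, ((v x : ℂ))^2 *
          (inner ℂ (Λ x ((ctrlProj (F x)) (U f))) (Λ x ((ctrlProj (F x)) (T f))) : ℂ) ∂μ)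
        ≤ ((B * ‖f‖^2 : ℝ) : ℂ)) :
    ∀ f : H,
      Integrable (fun x => ((v x : ℂ))^2 *
        (inner ℂ (Λ x ((ctrlProj (F x)) ((adjoint V)
            ((ctrlProj (Submodule.map (V : H →ₗ[ℂ] H) (F x))) (U f)))))
          (Λ x ((ctrlProj (F x)) ((adjoint V)
            ((ctrlProj (Submodule.map (V : H →ₗ[ℂ] H) (F x))) (T f))))) : ℂ)) μ ∧
      ((A * (‖Vinv‖^2)⁻¹ * ‖f‖^2 : ℝ) : ℂ) ≤
        (∫ x, ((v x : ℂ))^2 *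
          (inner ℂ (Λ x ((ctrlProj (F x)) ((adjoint V)
              ((ctrlProj (Submodule.map (V : H →ₗ[ℂ] H) (F x))) (U f)))))
            (Λ x ((ctrlProj (F x)) ((adjoint V)
              ((ctrlProj (Submodule.map (V : H →ₗ[ℂ] H) (F x))) (T f))))) : ℂ) ∂μ) ∧
      (∫ x, ((v x : ℂ))^2 *
          (inner ℂ (Λ x ((ctrlProj (F x)) ((adjoint V)
              ((ctrlProj (Submodule.map (V : H →ₗ[ℂ] H) (F x))) (U f)))))
            (Λ x ((ctrlProj (F x)) ((adjoint V)
              ((ctrlProj (Submodule.map (V : H →ₗ[ℂ] H) (F x))) (T f))))) : ℂ) ∂μ)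
        ≤ ((B * ‖V‖^2 * ‖f‖^2 : ℝ) : ℂ) := by
  have hVTf : ∀ g : H, (adjoint V) (T g) = T ((adjoint V) g) := fun g =>
    congrFun (congrArg (fun (W : H →L[ℂ] H) => (W : H → H)) hVT) g
  have hVUf : ∀ g : H, (adjoint V) (U g) = U ((adjoint V) g) := fun g =>
    congrFun (congrArg (fun (W : H →L[ℂ] H) => (W : H → H)) hVU) g
  intro f
  have hfun : (fun x => ((v x : ℂ))^2 *
        (inner ℂ (Λ x ((ctrlProj (F x)) ((adjoint V)
            ((ctrlProj (Submodule.map (V : H →ₗ[ℂ] H) (F x))) (U f)))))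
          (Λ x ((ctrlProj (F x)) ((adjoint V)
            ((ctrlProj (Submodule.map (V : H →ₗ[ℂ] H) (F x))) (T f))))) : ℂ))
      = (fun x => ((v x : ℂ))^2 *
        (inner ℂ (Λ x ((ctrlProj (F x)) (U ((adjoint V) f))))
          (Λ x ((ctrlProj (F x)) (T ((adjoint V) f)))) : ℂ)) := by
    funext x
    rw [ctrlProj_adjoint_proj (F x) V (U f), ctrlProj_adjoint_proj (F x) V (T f),
      hVUf f, hVTf f]
  rw [hfun]
  refine ⟨hΛint ((adjoint V) f), ?_, ?_⟩
  · refine le_trans ?_ (hΛframe ((adjoint V) f)).1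
    rw [Complex.real_le_real]
    have h1 : ‖f‖ ≤ ‖Vinv‖ * ‖(adjoint V) f‖ := by
      have hf : (adjoint Vinv) ((adjoint V) f) = f := by
        have h : adjoint (V.comp Vinv) = ContinuousLinearMap.id ℂ H := by
          rw [hV₁, ContinuousLinearMap.adjoint_id]
        have := congrFun (congrArg (fun (W : H →L[ℂ] H) => (W : H → H)) h) f
        simpa [ContinuousLinearMap.adjoint_comp] using this
      calc ‖f‖ = ‖(adjoint Vinv) ((adjoint V) f)‖ := by rw [hf]
        _ ≤ ‖adjoint Vinv‖ * ‖(adjoint V) f‖ := (adjoint Vinv).le_opNorm _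
        _ = ‖Vinv‖ * ‖(adjoint V) f‖ := by
            rw [(ContinuousLinearMap.adjoint (E := H) (F := H)).norm_map Vinv]
    have hsq : ‖f‖^2 ≤ ‖Vinv‖^2 * ‖(adjoint V) f‖^2 := by
      calc ‖f‖^2 ≤ (‖Vinv‖ * ‖(adjoint V) f‖)^2 :=
            pow_le_pow_left₀ (norm_nonneg f) h1 2
        _ = ‖Vinv‖^2 * ‖(adjoint V) f‖^2 := by ring
    rcases eq_or_lt_of_le (norm_nonneg Vinv) with h0 | h0
    · have hf0 : ‖f‖ = 0 := le_antisymm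
        (by nlinarith [norm_nonneg ((adjoint V) f)]) (norm_nonneg f)
      rw [hf0]
      have h9 : A * (‖Vinv‖^2)⁻¹ * (0:ℝ)^2 = 0 := by ring
      rw [h9]
      positivity
    · rw [mul_assoc]
      apply mul_le_mul_of_nonneg_left _ hA.le
      rw [inv_mul_le_iff₀ (by positivity)]
      linarith [hsq]
  · refine le_trans (hΛframe ((adjoint V) f)).2 ?_
    rw [Complex.real_le_real]
    have h1 : ‖(adjoint V) f‖ ≤ ‖V‖ * ‖f‖ := by
      calc ‖(adjoint V) f‖ ≤ ‖adjoint V‖ * ‖f‖ := (adjoint V).le_opNorm f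
        _ = ‖V‖ * ‖f‖ := by
            rw [(ContinuousLinearMap.adjoint (E := H) (F := H)).norm_map V]
    have hsq : ‖(adjoint V) f‖^2 ≤ ‖V‖^2 * ‖f‖^2 := by
      calc ‖(adjoint V) f‖^2 ≤ (‖V‖ * ‖f‖)^2 := pow_le_pow_left₀ (norm_nonneg _) h1 2
        _ = ‖V‖^2 * ‖f‖^2 := by ring
    have hB : 0 ≤ B := le_trans hA.le hAB
    calc B * ‖(adjoint V) f‖^2 ≤ B * (‖V‖^2 * ‖f‖^2) :=
          mul_le_mul_of_nonneg_left hsq hB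
      _ = B * ‖V‖^2 * ‖f‖^2 := by ring
end

section
/- Let Λ_TU be a continuous (T,U)-controlled g-fusion frame for H with frame operator S_C, and let V be a bounded invertible operator on H such that V* commutes with both T and U. Then for every f ∈ H, ∫_X v(x)² ⟨Λ_x P_{F(x)} V* P_{V F(x)} U f, Λ_x P_{F(x)} V* P_{V F(x)} T f⟩ dμ(x) = ⟨V S_C V* f, f⟩; that is, the frame operator of the transformed family {(V F(x), Λ_x P_{F(x)} V*, v(x))}_{x∈X} is V S_C V*. -/
open MeasureTheory ContinuousLinearMap
open scoped ComplexOrder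

lemma ctrlProj_adjoint_proj_map {H : Type*} [NormedAddCommGroup H] [InnerProductSpace ℂ H]
    [CompleteSpace H] (M : Submodule ℂ H) [Submodule.HasOrthogonalProjection M]
    (V : H →L[ℂ] H) [Submodule.HasOrthogonalProjection (Submodule.map (V : H →ₗ[ℂ] H) M)] (h : H) :
    ctrlProj M ((adjoint V) ((ctrlProj (Submodule.map (V : H →ₗ[ℂ] H) M)) h)) =
      ctrlProj M ((adjoint V) h) := by
  have hw : h - (ctrlProj (Submodule.map (V : H →ₗ[ℂ] H) M)) h ∈ (Submodule.map (V : H →ₗ[ℂ] H) M)ᗮ := by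
    simpa [ctrlProj] using Submodule.sub_starProjection_mem_orthogonal (K := Submodule.map (V : H →ₗ[ℂ] H) M) h
  have hmem : (adjoint V) (h - (ctrlProj (Submodule.map (V : H →ₗ[ℂ] H) M)) h) ∈ Mᗮ := by
    intro m hm
    rw [adjoint_inner_right]
    exact hw _ (Submodule.mem_map_of_mem hm)
  have hzero : ((M.orthogonalProjectionOnto ((adjoint V)
      (h - (ctrlProj (Submodule.map (V : H →ₗ[ℂ] H) M)) h)) : H)) = 0 := by
    rw [Submodule.orthogonalProjectionOnto_apply_of_mem_orthogonal hmem]; rfl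
  have h2 : ((M.orthogonalProjectionOnto ((adjoint V) h) : H)) =
      ((M.orthogonalProjectionOnto ((adjoint V) ((ctrlProj (Submodule.map (V : H →ₗ[ℂ] H) M)) h)) : H)) := by
    rwa [map_sub, map_sub, Submodule.coe_sub, sub_eq_zero] at hzero
  simp [ctrlProj, h2]

lemma inner_ctrlProj {H : Type*} [NormedAddCommGroup H] [InnerProductSpace ℂ H]
    (M : Submodule ℂ H) [Submodule.HasOrthogonalProjection M] (a b : H) :
    (inner ℂ (ctrlProj M a) b : ℂ) = inner ℂ a (ctrlProj M b) := by
  simpa [ctrlProj] using Submodule.inner_starProjection_left_eq_right M a b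

/-- If `Λ_TU` is a continuous `(T,U)`-controlled `g`-fusion frame for `H` with
frame operator `S_C` and `V` is a bounded invertible operator on `H` whose adjoint commutes
with `T` and `U`, then the frame operator of the transformed family
`{(V F(x), Λₓ P_{F x} V*, v(x))}` is `V S_C V*`:
`∫ v(x)² ⟨Λₓ P_{F x} V* P_{V F x} U f, Λₓ P_{F x} V* P_{V F x} T f⟩ dμ = ⟨V S_C V* f, f⟩`. -/
theorem stmt4
    {H : Type*} [NormedAddCommGroup H] [InnerProductSpace ℂ H] [CompleteSpace H]
    {X : Type*} [MeasurableSpace X] (μ : Measure X)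
    {K : X → Type*} [∀ x, NormedAddCommGroup (K x)] [∀ x, InnerProductSpace ℂ (K x)]
    [∀ x, CompleteSpace (K x)]
    (F : X → Submodule ℂ H) [∀ x, Submodule.HasOrthogonalProjection (F x)]
    (Λ : ∀ x, H →L[ℂ] K x) (v : X → ℝ) (T U : H →L[ℂ] H)
    (V Vinv : H →L[ℂ] H)
    [∀ x, Submodule.HasOrthogonalProjection (Submodule.map (V : H →ₗ[ℂ] H) (F x))]
    (hv : Measurable v) (hvpos : ∀ x, 0 < v x)
    (hT : T.IsPositive) (hU : U.IsPositive) (hTinv : IsUnit T) (hUinv : IsUnit U)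
    (hFmeas : ∀ f g : H, Measurable fun x => (inner ℂ ((ctrlProj (F x)) f) g : ℂ))
    (hVFmeas : ∀ f g : H, Measurable fun x =>
      (inner ℂ ((ctrlProj (Submodule.map (V : H →ₗ[ℂ] H) (F x))) f) g : ℂ))
    -- V is invertible with inverse Vinv
    (hV₁ : V.comp Vinv = ContinuousLinearMap.id ℂ H)
    (hV₂ : Vinv.comp V = ContinuousLinearMap.id ℂ H)
    -- V* commutes with T and U
    (hVT : (adjoint V).comp T = T.comp (adjoint V))
    (hVU : (adjoint V).comp U = U.comp (adjoint V))
    (A B : ℝ) (hA : 0 < A) (hAB : A ≤ B)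
    -- Λ_TU is a continuous (T,U)-controlled g-fusion frame with bounds A, B
    (hΛint : ∀ f : H, Integrable (fun x => ((v x : ℂ))^2 *
      (inner ℂ (Λ x ((ctrlProj (F x)) (U f))) (Λ x ((ctrlProj (F x)) (T f))) : ℂ)) μ)
    (hΛframe : ∀ f : H,
      ((A * ‖f‖^2 : ℝ) : ℂ) ≤
        (∫ x, ((v x : ℂ))^2 *
          (inner ℂ (Λ x ((ctrlProj (F x)) (U f))) (Λ x ((ctrlProj (F x)) (T f))) : ℂ) ∂μ) ∧
      (∫ x, ((v x : ℂ))^2 *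
          (inner ℂ (Λ x ((ctrlProj (F x)) (U f))) (Λ x ((ctrlProj (F x)) (T f))) : ℂ) ∂μ)
        ≤ ((B * ‖f‖^2 : ℝ) : ℂ))
    -- S is the frame operator of Λ_TU
    (S : H →L[ℂ] H)
    (hSint : ∀ f g : H, Integrable (fun x => ((v x : ℂ))^2 *
      (inner ℂ ((adjoint T) ((ctrlProj (F x)) ((adjoint (Λ x))
        (Λ x ((ctrlProj (F x)) (U f)))))) g : ℂ)) μ)
    (hS : ∀ f g : H, (inner ℂ (S f) g : ℂ) = ∫ x, ((v x : ℂ))^2 *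
      (inner ℂ ((adjoint T) ((ctrlProj (F x)) ((adjoint (Λ x))
        (Λ x ((ctrlProj (F x)) (U f)))))) g : ℂ) ∂μ) :
    ∀ f : H,
      (∫ x, ((v x : ℂ))^2 *
        (inner ℂ (Λ x ((ctrlProj (F x)) ((adjoint V)
            ((ctrlProj (Submodule.map (V : H →ₗ[ℂ] H) (F x))) (U f)))))
          (Λ x ((ctrlProj (F x)) ((adjoint V)
            ((ctrlProj (Submodule.map (V : H →ₗ[ℂ] H) (F x))) (T f))))) : ℂ) ∂μ)
        = (inner ℂ ((V.comp (S.comp (adjoint V))) f) f : ℂ) := by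
  intro f
  have key : ∀ x : X, ∀ h : H,
      ctrlProj (F x) ((adjoint V) ((ctrlProj (Submodule.map (V : H →ₗ[ℂ] H) (F x))) h)) =
        ctrlProj (F x) ((adjoint V) h) :=
    fun x h => ctrlProj_adjoint_proj_map (F x) V h
  have hVU' : ∀ g : H, (adjoint V) (U g) = U ((adjoint V) g) := fun g =>
    congrFun (congrArg (fun (W : H →L[ℂ] H) => (W : H → H)) hVU) g
  have hVT' : ∀ g : H, (adjoint V) (T g) = T ((adjoint V) g) := fun g =>
    congrFun (congrArg (fun (W : H →L[ℂ] H) => (W : H → H)) hVT) g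
  have hLHS : ∀ x : X,
      ((v x : ℂ))^2 *
        (inner ℂ (Λ x ((ctrlProj (F x)) ((adjoint V)
            ((ctrlProj (Submodule.map (V : H →ₗ[ℂ] H) (F x))) (U f)))))
          (Λ x ((ctrlProj (F x)) ((adjoint V)
            ((ctrlProj (Submodule.map (V : H →ₗ[ℂ] H) (F x))) (T f))))) : ℂ)
      = ((v x : ℂ))^2 *
        (inner ℂ ((adjoint T) ((ctrlProj (F x)) ((adjoint (Λ x))
          (Λ x ((ctrlProj (F x)) (U ((adjoint V) f))))))) ((adjoint V) f) : ℂ) := by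
    intro x
    rw [key x (U f), key x (T f), hVU' f, hVT' f]
    congr 1
    rw [adjoint_inner_left, inner_ctrlProj, adjoint_inner_left, ← hVT' f]
  calc (∫ x, ((v x : ℂ))^2 *
        (inner ℂ (Λ x ((ctrlProj (F x)) ((adjoint V)
            ((ctrlProj (Submodule.map (V : H →ₗ[ℂ] H) (F x))) (U f)))))
          (Λ x ((ctrlProj (F x)) ((adjoint V)
            ((ctrlProj (Submodule.map (V : H →ₗ[ℂ] H) (F x))) (T f))))) : ℂ) ∂μ)
      = ∫ x, ((v x : ℂ))^2 *
        (inner ℂ ((adjoint T) ((ctrlProj (F x)) ((adjoint (Λ x))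
          (Λ x ((ctrlProj (F x)) (U ((adjoint V) f))))))) ((adjoint V) f) : ℂ) ∂μ := by
        exact integral_congr_ae (Filter.Eventually.of_forall hLHS)
    _ = inner ℂ (S ((adjoint V) f)) ((adjoint V) f) := (hS ((adjoint V) f) ((adjoint V) f)).symm
    _ = inner ℂ ((V.comp (S.comp (adjoint V))) f) f := by
        simp only [ContinuousLinearMap.comp_apply]
        rw [← adjoint_inner_right (A := V)]
end

section
/- Let Λ_TU be a continuous (T,U)-controlled g-fusion frame for H with bounds A, B and frame operator S_C, and assume S_C^{-1} commutes with both T and U. For x ∈ X set T_x = Λ_x P_{F(x)} S_C^{-1} : H → K_x. Then {v(x)² T* P_{F(x)} Λ_x* T_x U}_{x∈X} is a continuous resolution of the identity operator on H, and for every f ∈ H, (A/B²)‖f‖² ≤ ∫_X v(x)² ⟨T_x U f, T_x T f⟩ dμ(x) ≤ (B/A²)‖f‖². -/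
open MeasureTheory ContinuousLinearMap
open scoped ComplexOrder

lemma ctrlProj_inner_left {H : Type*} [NormedAddCommGroup H] [InnerProductSpace ℂ H]
    (F : Submodule ℂ H) [Submodule.HasOrthogonalProjection F] (w z : H) :
    (inner ℂ (ctrlProj F w) z : ℂ) = inner ℂ w (ctrlProj F z) := by
  exact Submodule.inner_starProjection_left_eq_right (K := F) w z

/-- Let `Λ_TU` be a continuous `(T,U)`-controlled `g`-fusion frame for `H`
with bounds `A, B` and frame operator `S_C` whose inverse commutes with `T` and `U`.  With
`T_x := Λₓ P_{F x} S_C⁻¹`, the family `{v(x)² T* P_{F x} Λₓ* T_x U}` is a continuous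
resolution of the identity on `H`, and
`(A/B²)‖f‖² ≤ ∫ v(x)² ⟨T_x U f, T_x T f⟩ dμ ≤ (B/A²)‖f‖²` for every `f ∈ H`. -/
theorem stmt9
    {H : Type*} [NormedAddCommGroup H] [InnerProductSpace ℂ H] [CompleteSpace H]
    {X : Type*} [MeasurableSpace X] (μ : Measure X)
    {K : X → Type*} [∀ x, NormedAddCommGroup (K x)] [∀ x, InnerProductSpace ℂ (K x)]
    [∀ x, CompleteSpace (K x)]
    (F : X → Submodule ℂ H) [∀ x, Submodule.HasOrthogonalProjection (F x)]
    (Λ : ∀ x, H →L[ℂ] K x) (v : X → ℝ) (T U : H →L[ℂ] H)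
    (hv : Measurable v) (hvpos : ∀ x, 0 < v x)
    (hT : T.IsPositive) (hU : U.IsPositive) (hTinv : IsUnit T) (hUinv : IsUnit U)
    (hFmeas : ∀ f g : H, Measurable fun x => (inner ℂ ((ctrlProj (F x)) f) g : ℂ))
    (A B : ℝ) (hA : 0 < A) (hAB : A ≤ B)
    -- Λ_TU is a continuous (T,U)-controlled g-fusion frame with bounds A, B
    (hΛint : ∀ f : H, Integrable (fun x => ((v x : ℂ))^2 *
      (inner ℂ (Λ x ((ctrlProj (F x)) (U f))) (Λ x ((ctrlProj (F x)) (T f))) : ℂ)) μ)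
    (hΛframe : ∀ f : H,
      ((A * ‖f‖^2 : ℝ) : ℂ) ≤
        (∫ x, ((v x : ℂ))^2 *
          (inner ℂ (Λ x ((ctrlProj (F x)) (U f))) (Λ x ((ctrlProj (F x)) (T f))) : ℂ) ∂μ) ∧
      (∫ x, ((v x : ℂ))^2 *
          (inner ℂ (Λ x ((ctrlProj (F x)) (U f))) (Λ x ((ctrlProj (F x)) (T f))) : ℂ) ∂μ)
        ≤ ((B * ‖f‖^2 : ℝ) : ℂ))
    -- S is the frame operator, invertible with inverse Sinv commuting with T and U
    (S Sinv : H →L[ℂ] H)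
    (hSint : ∀ f g : H, Integrable (fun x => ((v x : ℂ))^2 *
      (inner ℂ ((adjoint T) ((ctrlProj (F x)) ((adjoint (Λ x))
        (Λ x ((ctrlProj (F x)) (U f)))))) g : ℂ)) μ)
    (hS : ∀ f g : H, (inner ℂ (S f) g : ℂ) = ∫ x, ((v x : ℂ))^2 *
      (inner ℂ ((adjoint T) ((ctrlProj (F x)) ((adjoint (Λ x))
        (Λ x ((ctrlProj (F x)) (U f)))))) g : ℂ) ∂μ)
    (hS₁ : S.comp Sinv = ContinuousLinearMap.id ℂ H)
    (hS₂ : Sinv.comp S = ContinuousLinearMap.id ℂ H)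
    (hSinvT : Sinv.comp T = T.comp Sinv) (hSinvU : Sinv.comp U = U.comp Sinv) :
    -- {v(x)² T* P_{F x} Λₓ* T_x U} is a continuous resolution of the identity, where
    -- T_x = Λₓ P_{F x} S_C⁻¹
    (∀ f g : H,
      Integrable (fun x => ((v x : ℂ))^2 *
        (inner ℂ ((adjoint T) ((ctrlProj (F x)) ((adjoint (Λ x))
          (Λ x ((ctrlProj (F x)) (Sinv (U f))))))) g : ℂ)) μ ∧
      (inner ℂ f g : ℂ) = ∫ x, ((v x : ℂ))^2 *
        (inner ℂ ((adjoint T) ((ctrlProj (F x)) ((adjoint (Λ x))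
          (Λ x ((ctrlProj (F x)) (Sinv (U f))))))) g : ℂ) ∂μ) ∧
    -- the frame inequalities with bounds A/B² and B/A²
    (∀ f : H,
      Integrable (fun x => ((v x : ℂ))^2 *
        (inner ℂ (Λ x ((ctrlProj (F x)) (Sinv (U f))))
          (Λ x ((ctrlProj (F x)) (Sinv (T f)))) : ℂ)) μ ∧
      ((A / B^2 * ‖f‖^2 : ℝ) : ℂ) ≤
        (∫ x, ((v x : ℂ))^2 *
          (inner ℂ (Λ x ((ctrlProj (F x)) (Sinv (U f))))
            (Λ x ((ctrlProj (F x)) (Sinv (T f)))) : ℂ) ∂μ) ∧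
      (∫ x, ((v x : ℂ))^2 *
          (inner ℂ (Λ x ((ctrlProj (F x)) (Sinv (U f))))
            (Λ x ((ctrlProj (F x)) (Sinv (T f)))) : ℂ) ∂μ)
        ≤ ((B / A^2 * ‖f‖^2 : ℝ) : ℂ)) := by
  have hB : (0:ℝ) < B := lt_of_lt_of_le hA hAB
  have hcU : ∀ f : H, Sinv (U f) = U (Sinv f) := fun f => DFunLike.congr_fun hSinvU f
  have hcT : ∀ f : H, Sinv (T f) = T (Sinv f) := fun f => DFunLike.congr_fun hSinvT f
  have hSSinv : ∀ f : H, S (Sinv f) = f := fun f => DFunLike.congr_fun hS₁ f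
  -- ⟪S f, f⟫ equals the frame integral
  have hSff : ∀ f : H, (inner ℂ (S f) f : ℂ) = ∫ x, ((v x : ℂ))^2 *
      (inner ℂ (Λ x ((ctrlProj (F x)) (U f))) (Λ x ((ctrlProj (F x)) (T f))) : ℂ) ∂μ := by
    intro f
    rw [hS f f]
    congr 1
    funext x
    congr 1
    rw [ContinuousLinearMap.adjoint_inner_left, ctrlProj_inner_left,
      ContinuousLinearMap.adjoint_inner_left]
  have hSbds : ∀ f : H, ((A * ‖f‖^2 : ℝ) : ℂ) ≤ (inner ℂ (S f) f : ℂ) ∧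
      (inner ℂ (S f) f : ℂ) ≤ ((B * ‖f‖^2 : ℝ) : ℂ) := fun f => by
    rw [hSff f]; exact hΛframe f
  have him : ∀ f : H, (inner ℂ (S f) f : ℂ).im = 0 := fun f => by
    simpa [← Complex.ofReal_pow] using ((Complex.le_def.mp (hSbds f).1).2).symm
  have hre_lb : ∀ f : H, A * ‖f‖^2 ≤ (inner ℂ (S f) f : ℂ).re := fun f => by
    simpa [← Complex.ofReal_pow] using (Complex.le_def.mp (hSbds f).1).1
  have hre_ub : ∀ f : H, (inner ℂ (S f) f : ℂ).re ≤ B * ‖f‖^2 := fun f => by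
    simpa [← Complex.ofReal_pow] using (Complex.le_def.mp (hSbds f).2).1
  have hpos : S.IsPositive := by
    rw [ContinuousLinearMap.isPositive_iff_complex]
    intro f
    refine ⟨?_, ?_⟩
    · apply Complex.ext <;> simp [him f]
    · have := hre_lb f
      have : (0:ℝ) ≤ A * ‖f‖^2 := by positivity
      simp only [RCLike.re_to_complex]
      linarith [hre_lb f]
  have hBle : S ≤ (B : ℂ) • 1 := by
    rw [ContinuousLinearMap.le_def, ContinuousLinearMap.isPositive_iff_complex]
    intro f
    have happ : ((B : ℂ) • (1 : H →L[ℂ] H) - S) f = (B : ℂ) • f - S f := rfl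
    have h1 : (inner ℂ (((B : ℂ) • (1 : H →L[ℂ] H) - S) f) f : ℂ)
        = (B : ℂ) * (‖f‖ : ℂ)^2 - (inner ℂ (S f) f : ℂ) := by
      rw [happ, inner_sub_left, inner_smul_left, inner_self_eq_norm_sq_to_K]
      simp
    rw [h1]
    constructor
    · apply Complex.ext <;> simp [him f, ← Complex.ofReal_pow]
    · simp only [RCLike.re_to_complex, Complex.sub_re, Complex.mul_re, Complex.ofReal_re,
        Complex.ofReal_im]
      have h2 := hre_ub f
      have h3 : (((‖f‖ : ℂ))^2).re = ‖f‖^2 := by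
        norm_cast
      have h4 : (((‖f‖ : ℂ))^2).im = 0 := by
        norm_cast
      rw [h3, h4]
      simp only [mul_zero, sub_zero]
      linarith
  have hnorm : ‖S‖ ≤ B := by
    refine (CStarAlgebra.norm_le_norm_of_nonneg_of_le
      ((ContinuousLinearMap.nonneg_iff_isPositive S).mpr hpos) hBle).trans ?_
    calc ‖(B:ℂ) • (1 : H →L[ℂ] H)‖ = ‖(B:ℂ)‖ * ‖(1 : H →L[ℂ] H)‖ := norm_smul _ _
    _ ≤ B * 1 := by
        have h5 : ‖(1 : H →L[ℂ] H)‖ ≤ 1 := ContinuousLinearMap.norm_id_le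
        have hB' : ‖(B:ℂ)‖ = B := by simp [Complex.norm_real, abs_of_nonneg hB.le]
        rw [hB']; exact mul_le_mul_of_nonneg_left h5 hB.le
    _ = B := mul_one B
  have hlbS : ∀ f : H, A * ‖f‖ ≤ ‖S f‖ := by
    intro f
    rcases eq_or_ne f 0 with rfl | hf
    · simp
    · have h1 := hre_lb f
      have h2 : (inner ℂ (S f) f : ℂ).re ≤ ‖S f‖ * ‖f‖ :=
        (Complex.re_le_norm _).trans
          (by simpa using norm_inner_le_norm (𝕜 := ℂ) (S f) f)
      have hfpos : (0:ℝ) < ‖f‖ := norm_pos_iff.mpr hf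
      nlinarith
  have hSinv_ub : ∀ f : H, ‖Sinv f‖ ≤ ‖f‖ / A := by
    intro f
    have h := hlbS (Sinv f)
    rw [hSSinv f] at h
    rw [le_div_iff₀ hA]
    linarith
  have hSinv_lb : ∀ f : H, ‖f‖ / B ≤ ‖Sinv f‖ := by
    intro f
    have h := (S.le_opNorm (Sinv f)).trans
      (mul_le_mul_of_nonneg_right hnorm (norm_nonneg _))
    rw [hSSinv f] at h
    rw [div_le_iff₀ hB]
    linarith
  refine ⟨fun f g => ?_, fun f => ?_⟩
  · constructor
    · rw [hcU f]; exact hSint (Sinv f) g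
    · rw [hcU f, ← hS (Sinv f) g, hSSinv f]
  · refine ⟨?_, ?_, ?_⟩
    · rw [hcU f, hcT f]; exact hΛint (Sinv f)
    · rw [hcU f, hcT f]
      refine le_trans ?_ (hΛframe (Sinv f)).1
      rw [Complex.real_le_real]
      have h2 : (‖f‖/B)^2 ≤ ‖Sinv f‖^2 :=
        pow_le_pow_left₀ (by positivity) (hSinv_lb f) 2
      have h3 : A / B^2 * ‖f‖^2 = A * (‖f‖/B)^2 := by ring
      rw [h3]
      exact mul_le_mul_of_nonneg_left h2 hA.le
    · rw [hcU f, hcT f]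
      refine le_trans (hΛframe (Sinv f)).2 ?_
      rw [Complex.real_le_real]
      have h2 : ‖Sinv f‖^2 ≤ (‖f‖/A)^2 :=
        pow_le_pow_left₀ (norm_nonneg _) (hSinv_ub f) 2
      have h3 : B / A^2 * ‖f‖^2 = B * (‖f‖/A)^2 := by ring
      rw [h3]
      exact mul_le_mul_of_nonneg_left h2 hB.le
end
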